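/- arXiv:2105.04738 — 2 statements merged into one kernel-verified Lean document; each statement's English description precedes it below -/
import Mathlib

section
/- Let σ_f > 0 and for each j = 1,…,n let 0 < κⱼ ≤ σ_f² and σ_e^{[j]} > 0 with σ_e^{min} = minⱼ σ_e^{[j]} and σ_e^{max} = maxⱼ σ_e^{[j]}. Define the aggregated variance s by s⁻¹ = (1/n)·∑ⱼ (σ_f² − κⱼ²/(σ_f² + (σ_e^{[j]})²))⁻¹. Then σ_f²·(σ_e^{min})²/(σ_f² + (σ_e^{min})²) ≤ s ≤ σ_f² − ((1/n)·∑ⱼ κⱼ²)/(σ_f² + (σ_e^{max})²). -/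
/-!
Each local variance `σ_f² − κⱼ²/(σ_f² + σⱼ²)` increases with the noise `σⱼ` and decreases with
`κⱼ²`. Replacing `κⱼ` by its largest value `σ_f²` and `σⱼ` by `σ_min` bounds every local
variance from below by `σ_f² σ_min²/(σ_f² + σ_min²)`, and the harmonic mean `s` lies above the
smallest term. Replacing `σⱼ` by `σ_max` bounds them from above, and `s` lies below their
arithmetic mean (HM ≤ AM, i.e. Cauchy–Schwarz).
-/

open Finset

section HarmonicMean

variable {ι K : Type*} [Fintype ι] [Nonempty ι] [Field K] [LinearOrder K] [IsStrictOrderedRing K]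

lemma le_inv_mean_inv_of_forall_le {v : ι → K} {L : K} (hL : 0 < L) (hv : ∀ i, L ≤ v i) :
    L ≤ ((1 / (Fintype.card ι : K)) * ∑ i, (v i)⁻¹)⁻¹ := by
  have hcard : (0 : K) < Fintype.card ι := by exact_mod_cast Fintype.card_pos
  have hmean_pos : 0 < (1 / (Fintype.card ι : K)) * ∑ i, (v i)⁻¹ :=
    mul_pos (by positivity) <| sum_pos (fun i _ => inv_pos.2 (hL.trans_le (hv i))) univ_nonempty
  rw [le_inv_comm₀ hL hmean_pos, one_div_mul_eq_div, div_le_iff₀' hcard]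
  calc ∑ i, (v i)⁻¹ ≤ ∑ _i : ι, L⁻¹ := sum_le_sum fun i _ => inv_anti₀ hL (hv i)
    _ = Fintype.card ι * L⁻¹ := by rw [sum_const, card_univ, nsmul_eq_mul]

lemma inv_mean_inv_le_mean {v : ι → K} (hv : ∀ i, 0 < v i) :
    ((1 / (Fintype.card ι : K)) * ∑ i, (v i)⁻¹)⁻¹ ≤ (1 / (Fintype.card ι : K)) * ∑ i, v i := by
  have hcard : (0 : K) < Fintype.card ι := by exact_mod_cast Fintype.card_pos
  have hinv : 0 < ∑ i, (v i)⁻¹ := sum_pos (fun i _ => inv_pos.2 (hv i)) univ_nonempty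
  -- Cauchy–Schwarz applied to `1 = v i * (v i)⁻¹`
  have hcs : (Fintype.card ι : K) ^ 2 ≤ (∑ i, v i) * ∑ i, (v i)⁻¹ := by
    simpa using sum_sq_le_sum_mul_sum_of_sq_le_mul univ (r := fun _ => (1 : K))
      (fun i _ => (hv i).le) (fun i _ => (inv_pos.2 (hv i)).le)
      (fun i _ => by rw [mul_inv_cancel₀ (hv i).ne', one_pow])
  rw [one_div_mul_eq_div, one_div_mul_eq_div, inv_div, div_le_div_iff₀ hinv hcard, ← sq]
  exact hcs

end HarmonicMean

noncomputable def localPredictiveVariance (σf κ σe : ℝ) : ℝ :=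
  σf ^ 2 - κ ^ 2 / (σf ^ 2 + σe ^ 2)

lemma localPredictiveVariance_le_localPredictiveVariance {σf κ κ' σe σe' : ℝ}
    (hpos : 0 < σf ^ 2 + σe ^ 2) (hκ : κ' ^ 2 ≤ κ ^ 2) (hσe : σe ^ 2 ≤ σe' ^ 2) :
    localPredictiveVariance σf κ σe ≤ localPredictiveVariance σf κ' σe' := by
  unfold localPredictiveVariance
  gcongr

lemma localPredictiveVariance_sq_self {σf σe : ℝ} (hpos : σf ^ 2 + σe ^ 2 ≠ 0) :
    localPredictiveVariance σf (σf ^ 2) σe = σf ^ 2 * σe ^ 2 / (σf ^ 2 + σe ^ 2) := by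
  unfold localPredictiveVariance
  field_simp
  ring

theorem aggregated_variance_bounds_general (n : ℕ) (σf : ℝ) (hσf : 0 < σf)
    (κ σe : Fin n → ℝ)
    (hκ : ∀ j, 0 < κ j) (hκ' : ∀ j, κ j ≤ σf ^ 2) (hσe : ∀ j, 0 < σe j)
    (σemin σemax : ℝ)
    (hminle : ∀ j, σemin ≤ σe j) (hminmem : ∃ j, σemin = σe j)
    (hmaxle : ∀ j, σe j ≤ σemax)
    (s : ℝ)
    (hs : s⁻¹ = (1 / (n : ℝ)) * ∑ j, (σf ^ 2 - κ j ^ 2 / (σf ^ 2 + σe j ^ 2))⁻¹) :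
    σf ^ 2 * σemin ^ 2 / (σf ^ 2 + σemin ^ 2) ≤ s ∧
      s ≤ σf ^ 2 - ((1 / (n : ℝ)) * ∑ j, κ j ^ 2) / (σf ^ 2 + σemax ^ 2) := by
  obtain ⟨j₀, rfl⟩ := hminmem
  have : Nonempty (Fin n) := ⟨j₀⟩
  have hden (e : ℝ) : 0 < σf ^ 2 + e ^ 2 := by positivity
  set v := fun j => localPredictiveVariance σf (κ j) (σe j)
  have hs' : s = ((1 / (n : ℝ)) * ∑ j, (v j)⁻¹)⁻¹ := by rw [← inv_inv s, hs]; rfl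
  have hlower (j : Fin n) : localPredictiveVariance σf (σf ^ 2) (σe j₀) ≤ v j :=
    localPredictiveVariance_le_localPredictiveVariance (hden _)
      (pow_le_pow_left₀ (hκ j).le (hκ' j) 2) (pow_le_pow_left₀ (hσe j₀).le (hminle j) 2)
  have hlower_pos : 0 < localPredictiveVariance σf (σf ^ 2) (σe j₀) := by
    rw [localPredictiveVariance_sq_self (hden _).ne']
    have := hσe j₀
    positivity
  rw [← localPredictiveVariance_sq_self (hden _).ne']
  refine ⟨by simpa only [Fintype.card_fin, ← hs'] using
    le_inv_mean_inv_of_forall_le hlower_pos hlower, ?_⟩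
  have hn : (n : ℝ) ≠ 0 := by exact_mod_cast (Fin.pos j₀).ne'
  calc s ≤ (1 / (n : ℝ)) * ∑ j, v j := by
        simpa only [Fintype.card_fin, ← hs'] using
          inv_mean_inv_le_mean fun j => hlower_pos.trans_le (hlower j)
    _ ≤ (1 / (n : ℝ)) * ∑ j, localPredictiveVariance σf (κ j) σemax := by
        gcongr with j
        exact localPredictiveVariance_le_localPredictiveVariance (hden _) le_rfl
          (pow_le_pow_left₀ (hσe j).le (hmaxle j) 2)
    _ = σf ^ 2 - ((1 / (n : ℝ)) * ∑ j, κ j ^ 2) / (σf ^ 2 + σemax ^ 2) := by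
        simp only [localPredictiveVariance, sum_sub_distrib, ← sum_div, sum_const, card_univ,
          Fintype.card_fin, nsmul_eq_mul]
        field_simp

theorem aggregated_variance_bounds (n : ℕ) (hn : 1 ≤ n) (σf : ℝ) (hσf : 0 < σf)
    (κ σe : Fin n → ℝ)
    (hκ : ∀ j, 0 < κ j) (hκ' : ∀ j, κ j ≤ σf ^ 2) (hσe : ∀ j, 0 < σe j)
    (σemin σemax : ℝ)
    (hminle : ∀ j, σemin ≤ σe j) (hminmem : ∃ j, σemin = σe j)
    (hmaxle : ∀ j, σe j ≤ σemax) (hmaxmem : ∃ j, σemax = σe j)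
    (s : ℝ)
    (hs : s⁻¹ = (1 / (n : ℝ)) * ∑ j, (σf ^ 2 - κ j ^ 2 / (σf ^ 2 + σe j ^ 2))⁻¹) :
    σf ^ 2 * σemin ^ 2 / (σf ^ 2 + σemin ^ 2) ≤ s ∧
      s ≤ σf ^ 2 - ((1 / (n : ℝ)) * ∑ j, κ j ^ 2) / (σf ^ 2 + σemax ^ 2) :=
  aggregated_variance_bounds_general n σf hσf κ σe hκ hκ' hσe σemin σemax hminle hminmem hmaxle s hs
end

section
/- Let σ_f > 0, x₁,…,xₙ > 0, and f₂(x) = σ_f²·x/(σ_f² + x). If xᵢ > (1/n)·∑ⱼ xⱼ for some index i, then (f₂(xᵢ))⁻¹ < (1/n)·∑ⱼ (f₂(xⱼ))⁻¹, i.e., f₂(xᵢ) exceeds the harmonic-type aggregate ((1/n)·∑ⱼ f₂(xⱼ)⁻¹)⁻¹. -/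
/-!
The reciprocal of `f₂(x) = σ² x / (σ² + x)` is `x⁻¹ + σ⁻²`, so the claim reduces to
`xᵢ⁻¹ < (1/n) ∑ⱼ xⱼ⁻¹`. Since `xᵢ` exceeds the mean of the `xⱼ`, its reciprocal is below the
reciprocal of that mean, which by Jensen's inequality for the convex function `t ↦ t⁻¹` is at most
the mean of the reciprocals.
-/

open Finset

lemma inv_mul_div_add_eq_inv_add_inv {K : Type*} [Field K] {a x : K} (ha : a ≠ 0) (hx : x ≠ 0) :
    (a * x / (a + x))⁻¹ = x⁻¹ + a⁻¹ := by
  field_simp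

lemma inv_mean_le_mean_inv {ι : Type*} (s : Finset ι) (hs : s.Nonempty) {x : ι → ℝ}
    (hx : ∀ j ∈ s, 0 < x j) :
    ((1 / (#s : ℝ)) * ∑ j ∈ s, x j)⁻¹ ≤ (1 / (#s : ℝ)) * ∑ j ∈ s, (x j)⁻¹ := by
  have hcard : (0 : ℝ) < #s := by exact_mod_cast hs.card_pos
  have jensen := (convexOn_zpow (𝕜 := ℝ) (-1)).map_sum_le (t := s) (w := fun _ => 1 / (#s : ℝ))
    (p := x) (fun _ _ => by positivity) (by simp [hcard.ne']) hx
  simpa only [zpow_neg_one, smul_eq_mul, ← mul_sum] using jensen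

lemma inv_lt_mean_inv_of_mean_lt {ι : Type*} (s : Finset ι) {x : ι → ℝ}
    (hx : ∀ j ∈ s, 0 < x j) {i : ι} (hi : i ∈ s) (hlt : (1 / (#s : ℝ)) * ∑ j ∈ s, x j < x i) :
    (x i)⁻¹ < (1 / (#s : ℝ)) * ∑ j ∈ s, (x j)⁻¹ := by
  have hs : s.Nonempty := ⟨i, hi⟩
  have hmean : 0 < (1 / (#s : ℝ)) * ∑ j ∈ s, x j := by
    have : (0 : ℝ) < #s := by exact_mod_cast hs.card_pos
    exact mul_pos (by positivity) (sum_pos hx hs)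
  calc (x i)⁻¹ < ((1 / (#s : ℝ)) * ∑ j ∈ s, x j)⁻¹ := (inv_lt_inv₀ (hx i hi) hmean).2 hlt
    _ ≤ (1 / (#s : ℝ)) * ∑ j ∈ s, (x j)⁻¹ := inv_mean_le_mean_inv s hs hx

theorem above_average_inv_strict_general (σf : ℝ) (hσf : 0 < σf) (n : ℕ)
    (x : Fin n → ℝ) (hx : ∀ j, 0 < x j)
    (i : Fin n) (hi : (1 / (n : ℝ)) * ∑ j, x j < x i) :
    (σf ^ 2 * x i / (σf ^ 2 + x i))⁻¹ <
      (1 / (n : ℝ)) * ∑ j, (σf ^ 2 * x j / (σf ^ 2 + x j))⁻¹ := by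
  have hn : (n : ℝ) ≠ 0 := by exact_mod_cast (Fin.pos i).ne'
  have hinv : ∀ j, (σf ^ 2 * x j / (σf ^ 2 + x j))⁻¹ = (x j)⁻¹ + (σf ^ 2)⁻¹ := fun j =>
    inv_mul_div_add_eq_inv_add_inv (by positivity) (hx j).ne'
  have hinv_lt := inv_lt_mean_inv_of_mean_lt univ (fun j _ => hx j) (mem_univ i)
    (by simpa only [card_univ, Fintype.card_fin] using hi)
  simp only [card_univ, Fintype.card_fin] at hinv_lt
  simp only [hinv, sum_add_distrib, sum_const, card_univ, Fintype.card_fin, nsmul_eq_mul, mul_add]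
  have hconst : 1 / (n : ℝ) * (n * (σf ^ 2)⁻¹) = (σf ^ 2)⁻¹ := by field_simp
  linarith

theorem above_average_inv_strict (σf : ℝ) (hσf : 0 < σf) (n : ℕ) (hn : 1 ≤ n)
    (x : Fin n → ℝ) (hx : ∀ j, 0 < x j)
    (i : Fin n) (hi : (1 / (n : ℝ)) * ∑ j, x j < x i) :
    (σf ^ 2 * x i / (σf ^ 2 + x i))⁻¹ <
      (1 / (n : ℝ)) * ∑ j, (σf ^ 2 * x j / (σf ^ 2 + x j))⁻¹ :=
  above_average_inv_strict_general σf hσf n x hx i hi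
end
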